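/- arXiv:0708.3449 — 2 statements merged into one kernel-verified Lean document; each statement's English description precedes it below -/
import Mathlib

section
/- Let n ≥ 1, let v* ∈ ℂⁿ with ‖v*‖ = 1, let 0 < γ ≤ 2·ln 3/(9e), and set K := { zv ∈ Bⁿ : z ∈ ℂ, |z| < 1, v ∈ ℂⁿ, ‖v‖ = 1, ‖v − v*‖ ≤ γ }. Then for every boundary point z of the unit ball Bⁿ ⊂ ℂⁿ there is a real straight line l_z ⊂ ℂⁿ passing through z such that l_z intersects K in an interval I_z of length |I_z| > (9/10)·γ. -/
open Metric Set Filter MeasureTheory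
open scoped Real ENNReal Topology

noncomputable section

abbrev En (n : ℕ) := EuclideanSpace ℂ (Fin n)

/-- `M_f(r, z₀)`: the supremum of `|f|` over the open ball of radius `r` about `z₀`. -/
def supMod {E : Type*} [NormedAddCommGroup E] (f : E → ℂ) (r : ℝ) (z₀ : E) : ℝ :=
  sSup ((fun z => ‖f z‖) '' Metric.ball z₀ r)

/-- `M_f(r) = M_f(r, 0)`. -/
def supMod0 {E : Type*} [NormedAddCommGroup E] (f : E → ℂ) (r : ℝ) : ℝ :=
  supMod f r 0

open Classical in
/-- order of vanishing of `f` at `z` (junk value `0` if `f` is not analytic at `z` or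
vanishes identically near `z`). -/
def ordAt (f : ℂ → ℂ) (z : ℂ) : ℕ :=
  if h : AnalyticAt ℂ f z then (analyticOrderAt f z).toNat else 0

/-- `n_f(r)`: the number of zeros of `f` in the open disc of radius `r` about `0`,
counted with multiplicities. -/
def zeroCountE (f : ℂ → ℂ) (r : ℝ) : ℝ≥0∞ :=
  ∑' z : Metric.ball (0 : ℂ) r, (ordAt f z : ℝ≥0∞)

/-- `v_f(r)`: the valency of `f` in the disc of radius `r` about `0`. -/
def valencyE (f : ℂ → ℂ) (r : ℝ) : ℝ≥0∞ :=
  ⨆ c : ℂ, zeroCountE (fun z => f z + c) r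

/-- The Bernstein index `b_f(r)` of `f` on the disc of radius `r` about `0`. -/
def bern (f : ℂ → ℂ) (r : ℝ) : ℝ :=
  sSup {x | ∃ (z : ℂ) (s : ℝ), 0 < s ∧
    Metric.closedBall z (Real.exp 1 * s) ⊆ Metric.ball (0 : ℂ) r ∧
    x = Real.log (supMod f (Real.exp 1 * s) z) - Real.log (supMod f s z)}

/-- `R_f(r,t,s) = M_f(r/t)/M_f(r/s)`. -/
def Rquot {E : Type*} [NormedAddCommGroup E] (f : E → ℂ) (r t s : ℝ) : ℝ :=
  supMod0 f (r / t) / supMod0 f (r / s)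

/-- `k(t,s)`. -/
def kts (t s : ℝ) : ℝ :=
  Real.log (8 * Real.exp (Real.pi ^ 2) * s * Real.sqrt t / (Real.sqrt t - 1) ^ 2)

/-- The identification of `ℂ` with the diagonal line; for `n = 1` this is the natural
identification `ℂ ≃ ℂ¹`. -/
def diagC (n : ℕ) (z : ℂ) : En n := (WithLp.equiv 2 (∀ _ : Fin n, ℂ)).symm fun _ => z

/-- `V_f(r,t)`: infimum of valencies of restrictions of `f` to complex lines through `0`
(on which `f` is nonconstant). -/
def VfE (n : ℕ) (f : En n → ℂ) (r t : ℝ) : ℝ≥0∞ :=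
  ⨅ v : {v : En n // ‖v‖ = 1 ∧
      ¬∃ c : ℂ, Set.EqOn (fun z : ℂ => f (z • v)) (fun _ => c) (Metric.ball (0 : ℂ) (t * r))},
    valencyE (fun z : ℂ => f (z • (v : En n))) (r / Real.sqrt t)

/-- `N_f(r,t)`. -/
def NfE (n : ℕ) (f : En n → ℂ) (r t : ℝ) : ℝ≥0∞ :=
  if n = 1 then valencyE (fun z : ℂ => f (diagC n z)) (r / Real.sqrt t)
  else
    max (ENNReal.ofReal (sSup {x | ∃ s : ℝ, t ≤ s ∧
        x = Real.log (Rquot f r t s / Real.sqrt t) / kts t s}))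
      (VfE n f r t)

/-- The class `F_{p,q}(r;t;M₂)`. -/
def MemF (n : ℕ) (g : En n × ℂ → ℂ) (p q r t M₂ : ℝ) : Prop :=
  DifferentiableOn ℂ g (Metric.ball (0 : En n) (t * r) ×ˢ Metric.ball (0 : ℂ) (3 * M₂)) ∧
  (∀ v : En n, ‖v‖ = 1 → ∀ w ∈ Metric.ball (0 : ℂ) (3 * M₂),
    supMod0 (fun z : ℂ => g (z • v, w)) (t * r) ≤
      Real.exp p * supMod0 (fun z : ℂ => g (z • v, w)) r) ∧
  (∀ z ∈ Metric.ball (0 : En n) (t * r), bern (fun w => g (z, w)) (3 * M₂) ≤ q)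

/-- The class `F_{p,q}(r;t;M₂)` in the one-dimensional case `n = 1`. -/
def MemF1 (g : ℂ × ℂ → ℂ) (p q r t M₂ : ℝ) : Prop :=
  DifferentiableOn ℂ g (Metric.ball (0 : ℂ) (t * r) ×ˢ Metric.ball (0 : ℂ) (3 * M₂)) ∧
  (∀ w ∈ Metric.ball (0 : ℂ) (3 * M₂),
    supMod0 (fun z : ℂ => g (z, w)) (t * r) ≤ Real.exp p * supMod0 (fun z : ℂ => g (z, w)) r) ∧
  (∀ z ∈ Metric.ball (0 : ℂ) (t * r), bern (fun w => g (z, w)) (3 * M₂) ≤ q)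

end

/-- The convex body `K` of Lemma 6.3. -/
def Kset (n : ℕ) (vstar : En n) (γ : ℝ) : Set (En n) :=
  {x | ∃ (w : ℂ) (v : En n), ‖w‖ < 1 ∧ ‖v‖ = 1 ∧ ‖v - vstar‖ ≤ γ ∧ x = w • v}


/-!
Put `c = 1 - γ² / 2`. For unit vectors, `‖v - v*‖ ≤ γ` iff `c ≤ Re ⟪v*, v⟫`, so `K` is the open
unit ball cut by the cone `c ‖x‖ ≤ |⟪v*, x⟫|`. If `z` lies in that cone, the diameter through `z`
is a chord of length `2`. Otherwise write `⟪v*, z⟫ = r μ` with `|μ| = 1` and take the line through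
`z` and `μ v* / 2`. It stays in the real plane spanned by `μ v*` and `p = z - ⟪v*, z⟫ v*`, where
the cone is a pair of rays and the cone condition factors into two linear conditions on the line
parameter. The chord cut out this way has length at least `√(1 - c²) / c > 9γ / 10`.
-/

open scoped InnerProductSpace

theorem two_mul_log_three_div_le : 2 * Real.log 3 / (9 * Real.exp 1) ≤ 2 / 9 := by
  have hlog : Real.log 3 ≤ 2 := by
    linarith [Real.log_le_sub_one_of_pos (by norm_num : (0 : ℝ) < 3)]
  have he : 2 ≤ Real.exp 1 := by linarith [Real.add_one_le_exp (1 : ℝ)]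
  rw [div_le_div_iff₀ (by positivity) (by norm_num)]
  nlinarith

theorem nine_div_ten_mul_lt_sqrt_div {γ : ℝ} (hγ0 : 0 < γ) (hγ : γ ≤ 2 / 9) :
    9 / 10 * γ < √(1 - (1 - γ ^ 2 / 2) ^ 2) / (1 - γ ^ 2 / 2) := by
  have hγ2 : γ ^ 2 ≤ 4 / 81 := by nlinarith
  have hc2 : (1 - γ ^ 2 / 2) ^ 2 ≤ 1 := by nlinarith
  rw [lt_div_iff₀ (by nlinarith), Real.lt_sqrt (by nlinarith)]
  nlinarith [mul_le_mul_of_nonneg_left hc2 (sq_nonneg γ), mul_pos hγ0 hγ0]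

theorem mem_Icc_iff_mul_nonneg {p q a b t : ℝ} (hp : 0 < p) (hq : 0 < q) (hab : a ≤ b) :
    t ∈ Icc a b ↔ 0 ≤ p * (t - a) * (q * (b - t)) := by
  refine ⟨fun ⟨hat, htb⟩ => by have := sub_nonneg.2 hat; have := sub_nonneg.2 htb; positivity,
    fun h => ⟨?_, ?_⟩⟩ <;> by_contra! ht
  · exact h.not_gt (mul_neg_of_neg_of_pos (mul_neg_of_pos_of_neg hp (by linarith))
      (mul_pos hq (by linarith)))
  · exact h.not_gt (mul_neg_of_pos_of_neg (mul_pos hp (by linarith))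
      (mul_neg_of_pos_of_neg hq (by linarith)))

section PlanarChord

variable {c r σ m : ℝ}

/-- In the real plane, the line `t ↦ (r + t (1/2 - r), (1 - t) m)` meets the boundary rays
`σ x = c y` and `σ x = - c y` of the cone `c² (x² + y²) ≤ x²` (where `σ² = 1 - c²`) at the
parameters `chordLo c r σ m` and `chordHi c r σ m`. -/
noncomputable def chordLo (c r σ m : ℝ) : ℝ := (c * m - σ * r) / (c * m + σ * (1 / 2 - r))

noncomputable def chordHi (c r σ m : ℝ) : ℝ := (c * m + σ * r) / (c * m - σ * (1 / 2 - r))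

theorem sq_sub_cone_eq_mul (hσ2 : σ ^ 2 = 1 - c ^ 2) (hp : c * m + σ * (1 / 2 - r) ≠ 0)
    (hq : c * m - σ * (1 / 2 - r) ≠ 0) (t : ℝ) :
    (r + t * (1 / 2 - r)) ^ 2 - c ^ 2 * ((r + t * (1 / 2 - r)) ^ 2 + (1 - t) ^ 2 * m ^ 2) =
      (c * m + σ * (1 / 2 - r)) * (t - chordLo c r σ m) *
        ((c * m - σ * (1 / 2 - r)) * (chordHi c r σ m - t)) := by
  have h₁ : (c * m + σ * (1 / 2 - r)) * (t - chordLo c r σ m) =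
      σ * (r + t * (1 / 2 - r)) - (1 - t) * (c * m) := by
    rw [chordLo, mul_sub, mul_div_cancel₀ _ hp]; ring
  have h₂ : (c * m - σ * (1 / 2 - r)) * (chordHi c r σ m - t) =
      σ * (r + t * (1 / 2 - r)) + (1 - t) * (c * m) := by
    rw [chordHi, mul_sub, mul_div_cancel₀ _ hq]; ring
  rw [h₁, h₂]
  linear_combination (-(r + t * (1 / 2 - r)) ^ 2) * hσ2

theorem mul_lt_of_lt_cone (hc : 0 < c) (hr : 0 ≤ r) (hrc : r < c) (hσ2 : σ ^ 2 = 1 - c ^ 2)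
    (hm : 0 < m) (hm2 : m ^ 2 = 1 - r ^ 2) : σ * r < c * m := by
  refine lt_of_pow_lt_pow_left₀ 2 (by positivity) ?_
  rw [mul_pow, mul_pow, hσ2, hm2]
  nlinarith

theorem abs_mul_lt_of_lt_cone (hc : 4 / 5 < c) (hr : 0 ≤ r) (hrc : r < c)
    (hσ2 : σ ^ 2 = 1 - c ^ 2) (hm : 0 < m) (hm2 : m ^ 2 = 1 - r ^ 2) :
    |σ * (1 / 2 - r)| < c * m := by
  refine lt_of_pow_lt_pow_left₀ 2 (by nlinarith) ?_
  have hd2 : (1 / 2 - r) ^ 2 ≤ 1 / 4 := by nlinarith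
  have hcσ : (1 - c ^ 2) / 4 ≤ c ^ 2 * (1 - c ^ 2) := by
    have hc2 : 1 / 4 ≤ c ^ 2 := by nlinarith
    nlinarith [mul_le_mul_of_nonneg_right hc2 (show 0 ≤ 1 - c ^ 2 by nlinarith)]
  rw [sq_abs, mul_pow, mul_pow, hσ2, hm2]
  nlinarith

-- The line leaves the unit disc at the parameter `(2 - r) / (5 / 4 - r)`.
theorem chordHi_mul_lt (hc : 4 / 5 < c) (hr : 0 ≤ r) (hσ : 0 ≤ σ) (hσ2 : σ ^ 2 = 1 - c ^ 2)
    (hm : 0 < m) (hm2 : m ^ 2 = 1 - r ^ 2) (hq : 0 < c * m - σ * (1 / 2 - r)) :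
    chordHi c r σ m * (5 / 4 - r) < 2 - r := by
  have hσc : σ < 3 / 4 * c := lt_of_pow_lt_pow_left₀ 2 (by positivity) (by nlinarith)
  -- `m ≥ m² = 1 - r² ≥ 1 - 5 r / 4`
  have hexit : σ * (1 - 5 * r / 4) < 3 / 4 * (c * m) :=
    calc σ * (1 - 5 * r / 4) ≤ σ * m := by gcongr; nlinarith
      _ < 3 / 4 * c * m := by gcongr
      _ = 3 / 4 * (c * m) := by ring
  rw [chordHi, div_mul_eq_mul_div, div_lt_iff₀ hq]
  nlinarith

theorem div_le_chordHi_sub_chordLo (hσ : 0 ≤ σ) (hM : 0 < c * m)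
    (hp : 0 < c * m + σ * (1 / 2 - r)) (hq : 0 < c * m - σ * (1 / 2 - r)) :
    σ / (c * m) ≤ chordHi c r σ m - chordLo c r σ m := by
  have hlen : chordHi c r σ m - chordLo c r σ m =
      σ * (c * m) / ((c * m - σ * (1 / 2 - r)) * (c * m + σ * (1 / 2 - r))) := by
    rw [chordHi, chordLo, div_sub_div _ _ hq.ne' hp.ne']; ring
  rw [hlen, div_le_div_iff₀ hM (mul_pos hq hp)]
  nlinarith [sq_nonneg (σ * (1 / 2 - r))]

theorem planar_chord (hc : 4 / 5 < c) (hr : 0 ≤ r) (hrc : r < c) (hσ : 0 < σ)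
    (hσ2 : σ ^ 2 = 1 - c ^ 2) (hm : 0 < m) (hm2 : m ^ 2 = 1 - r ^ 2) :
    σ / (c * m) ≤ chordHi c r σ m - chordLo c r σ m ∧
      ∀ t : ℝ, ((r + t * (1 / 2 - r)) ^ 2 + (1 - t) ^ 2 * m ^ 2 < 1 ∧
        c ^ 2 * ((r + t * (1 / 2 - r)) ^ 2 + (1 - t) ^ 2 * m ^ 2) ≤ (r + t * (1 / 2 - r)) ^ 2) ↔
          t ∈ Icc (chordLo c r σ m) (chordHi c r σ m) := by
  have hM : 0 < c * m := by nlinarith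
  have hσd := abs_lt.1 (abs_mul_lt_of_lt_cone hc hr hrc hσ2 hm hm2)
  have hp : 0 < c * m + σ * (1 / 2 - r) := by linarith
  have hq : 0 < c * m - σ * (1 / 2 - r) := by linarith
  have hlen := div_le_chordHi_sub_chordLo hσ.le hM hp hq
  have hlo : 0 < chordLo c r σ m :=
    div_pos (by linarith [mul_lt_of_lt_cone (by linarith) hr hrc hσ2 hm hm2]) hp
  have hhi := chordHi_mul_lt hc hr hσ.le hσ2 hm hm2 hq
  have hlohi : chordLo c r σ m ≤ chordHi c r σ m := by linarith [div_pos hσ hM]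
  have hball : ∀ t ∈ Icc (chordLo c r σ m) (chordHi c r σ m),
      (r + t * (1 / 2 - r)) ^ 2 + (1 - t) ^ 2 * m ^ 2 < 1 := by
    rintro t ⟨h₁, h₂⟩
    have hr54 : 0 < 5 / 4 - r := by nlinarith
    have hexit : t * (t * (5 / 4 - r) - (2 - r)) < 0 :=
      mul_neg_of_pos_of_neg (by linarith) (by nlinarith [mul_le_mul_of_nonneg_right h₂ hr54.le])
    have hQ : (r + t * (1 / 2 - r)) ^ 2 + (1 - t) ^ 2 * m ^ 2 =
        1 + t * (t * (5 / 4 - r) - (2 - r)) := by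
      rw [hm2]; ring
    linarith
  refine ⟨hlen, fun t => ?_⟩
  rw [mem_Icc_iff_mul_nonneg hp hq hlohi, ← sq_sub_cone_eq_mul hσ2 hp.ne' hq.ne']
  refine ⟨fun h => by linarith [h.2], fun h => ⟨hball t ?_, by linarith⟩⟩
  rwa [mem_Icc_iff_mul_nonneg hp hq hlohi, ← sq_sub_cone_eq_mul hσ2 hp.ne' hq.ne']

end PlanarChord

section PlaneCoordinates

variable {E : Type*} [NormedAddCommGroup E] [InnerProductSpace ℂ E] {e p : E}

theorem inner_smul_add_smul_of_inner_eq_zero (he : ‖e‖ = 1) (hp : ⟪e, p⟫_ℂ = 0) (a b : ℂ) :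
    ⟪e, a • e + b • p⟫_ℂ = a := by
  rw [inner_add_right, inner_smul_right, inner_smul_right, hp, inner_self_eq_norm_sq_to_K, he]
  simp

theorem norm_smul_add_smul_sq_of_inner_eq_zero (he : ‖e‖ = 1) (hp : ⟪e, p⟫_ℂ = 0) (a b : ℂ) :
    ‖a • e + b • p‖ ^ 2 = ‖a‖ ^ 2 + ‖b‖ ^ 2 * ‖p‖ ^ 2 := by
  have h : ⟪a • e, b • p⟫_ℂ = 0 := by rw [inner_smul_left, inner_smul_right, hp]; simp
  rw [sq, norm_add_sq_eq_norm_sq_add_norm_sq_of_inner_eq_zero _ _ h, norm_smul, norm_smul, he]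
  ring

theorem norm_sub_le_iff_le_re_inner {v : E} (hv : ‖v‖ = 1) (he : ‖e‖ = 1) {γ : ℝ} (hγ : 0 ≤ γ) :
    ‖v - e‖ ≤ γ ↔ 1 - γ ^ 2 / 2 ≤ (⟪e, v⟫_ℂ).re := by
  rw [← pow_le_pow_iff_left₀ (norm_nonneg _) hγ two_ne_zero, norm_sub_sq (𝕜 := ℂ), hv, he,
    inner_re_symm]
  constructor <;> intro h <;> simp only [RCLike.re_to_complex] at * <;> linarith

end PlaneCoordinates

section Kset

variable {n : ℕ} {vstar : En n} {γ : ℝ}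

theorem mem_Kset_iff (hvstar : ‖vstar‖ = 1) (hγ : 0 ≤ γ) {x : En n} :
    x ∈ Kset n vstar γ ↔ ‖x‖ < 1 ∧ (1 - γ ^ 2 / 2) * ‖x‖ ≤ ‖⟪vstar, x⟫_ℂ‖ := by
  constructor
  · rintro ⟨w, v, hw, hv, hvγ, rfl⟩
    have hre := (norm_sub_le_iff_le_re_inner hv hvstar hγ).1 hvγ
    rw [norm_smul, hv, mul_one, inner_smul_right, norm_mul, mul_comm]
    exact ⟨hw, mul_le_mul_of_nonneg_left (hre.trans (Complex.re_le_norm _)) (norm_nonneg w)⟩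
  · rintro ⟨hx, hcone⟩
    rcases eq_or_ne x 0 with rfl | hx0
    · exact ⟨0, vstar, by simp, hvstar, by simpa using hγ, by simp⟩
    have hx0' : 0 < ‖x‖ := norm_pos_iff.2 hx0
    obtain ⟨θ, hθ, hpolar⟩ : ∃ θ : ℂ, ‖θ‖ = 1 ∧ ⟪vstar, x⟫_ℂ = ‖⟪vstar, x⟫_ℂ‖ * θ :=
      ⟨_, Complex.norm_exp_ofReal_mul_I _, (Complex.norm_mul_exp_arg_mul_I _).symm⟩
    have hθ0 : θ ≠ 0 := norm_ne_zero_iff.1 (by rw [hθ]; exact one_ne_zero)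
    -- `w` has the modulus of `x` and the phase of `⟪vstar, x⟫`, so `⟪vstar, w⁻¹ • x⟫` is real
    set w : ℂ := ‖x‖ * θ
    have hw : ‖w‖ = ‖x‖ := by simp [w, hθ]
    have hw0 : w ≠ 0 := mul_ne_zero (by exact_mod_cast hx0'.ne') hθ0
    have hv : ‖w⁻¹ • x‖ = 1 := by rw [norm_smul, norm_inv, hw, inv_mul_cancel₀ hx0'.ne']
    have hinner : ⟪vstar, w⁻¹ • x⟫_ℂ = (‖⟪vstar, x⟫_ℂ‖ / ‖x‖ : ℝ) := by
      rw [inner_smul_right]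
      conv_lhs => rw [hpolar]
      simp only [w]
      push_cast
      field_simp
    refine ⟨w, w⁻¹ • x, by rwa [hw], hv, ?_, (smul_inv_smul₀ hw0 x).symm⟩
    rw [norm_sub_le_iff_le_re_inner hv hvstar hγ, hinner, Complex.ofReal_re, le_div_iff₀ hx0']
    exact hcone

end Kset

section Chords

variable {n : ℕ} {vstar z : En n} {γ : ℝ}

theorem setOf_add_smul_neg_mem_Kset (hvstar : ‖vstar‖ = 1) (hz : ‖z‖ = 1) (hγ : 0 ≤ γ)
    (hcone : 1 - γ ^ 2 / 2 ≤ ‖⟪vstar, z⟫_ℂ‖) :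
    {τ : ℝ | z + τ • -z ∈ Kset n vstar γ} = Ioo 0 2 := by
  ext τ
  have hline : z + τ • -z = ((1 - τ : ℝ) : ℂ) • z := by
    rw [Complex.coe_smul, sub_smul, one_smul, smul_neg, sub_eq_add_neg]
  have hcone' : (1 - γ ^ 2 / 2) * |1 - τ| ≤ |1 - τ| * ‖⟪vstar, z⟫_ℂ‖ := by
    rw [mul_comm]; gcongr
  rw [mem_ofPred_eq, hline, mem_Kset_iff hvstar hγ, inner_smul_right, norm_mul, norm_smul, hz,
    mul_one, Complex.norm_real, Real.norm_eq_abs, mem_Ioo, abs_sub_lt_iff]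
  constructor
  · rintro ⟨⟨h₁, h₂⟩, -⟩; constructor <;> linarith
  · rintro ⟨h₁, h₂⟩; exact ⟨⟨by linarith, by linarith⟩, hcone'⟩

theorem mem_Kset_iff_sq (hvstar : ‖vstar‖ = 1) (hγ : 0 ≤ γ) (hc : 0 ≤ 1 - γ ^ 2 / 2)
    {x : En n} : x ∈ Kset n vstar γ ↔
      ‖x‖ ^ 2 < 1 ∧ (1 - γ ^ 2 / 2) ^ 2 * ‖x‖ ^ 2 ≤ ‖⟪vstar, x⟫_ℂ‖ ^ 2 := by
  rw [mem_Kset_iff hvstar hγ, sq_lt_one_iff₀ (norm_nonneg _), ← mul_pow,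
    pow_le_pow_iff_left₀ (by positivity) (norm_nonneg _) two_ne_zero]

theorem exists_chord_of_norm_inner_lt (hvstar : ‖vstar‖ = 1) (hz : ‖z‖ = 1) (hγ0 : 0 < γ)
    (hγ : γ ≤ 2 / 9) (hcone : ‖⟪vstar, z⟫_ℂ‖ < 1 - γ ^ 2 / 2) :
    ∃ w : En n, w ≠ 0 ∧ ∃ t₁ t₂ : ℝ, 9 / 10 * γ < ‖w‖ * (t₂ - t₁) ∧
      {t : ℝ | z + t • w ∈ Kset n vstar γ} = Icc t₁ t₂ := by
  set c := 1 - γ ^ 2 / 2 with hc_def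
  set r := ‖⟪vstar, z⟫_ℂ‖
  obtain ⟨μ, hμ, hζ⟩ : ∃ μ : ℂ, ‖μ‖ = 1 ∧ ⟪vstar, z⟫_ℂ = r * μ :=
    ⟨_, Complex.norm_exp_ofReal_mul_I _, (Complex.norm_mul_exp_arg_mul_I _).symm⟩
  set p := z - ⟪vstar, z⟫_ℂ • vstar
  have hp : ⟪vstar, p⟫_ℂ = 0 := by
    rw [inner_sub_right, inner_smul_right, inner_self_eq_norm_sq_to_K, hvstar]; simp
  have plane (a b : ℝ) : ‖((a * μ : ℂ) • vstar + (b : ℂ) • p)‖ ^ 2 = a ^ 2 + b ^ 2 * ‖p‖ ^ 2 := by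
    rw [norm_smul_add_smul_sq_of_inner_eq_zero hvstar hp, norm_mul, hμ, mul_one,
      Complex.norm_real, Complex.norm_real, Real.norm_eq_abs, Real.norm_eq_abs, sq_abs, sq_abs]
  have hz' : z = ((r * μ : ℂ)) • vstar + ((1 : ℝ) : ℂ) • p := by
    rw [← hζ]; simp [p]
  have hp2 : ‖p‖ ^ 2 = 1 - r ^ 2 := by
    have := plane r 1; rw [← hz', hz] at this; linarith
  -- `w` points from `z` to `μ / 2 • vstar`, where `μ` is the phase of `⟪vstar, z⟫`
  set w : En n := (((1 / 2 - r : ℝ) * μ : ℂ)) • vstar + ((-1 : ℝ) : ℂ) • p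
  have hline (t : ℝ) : z + t • w =
      (((r + t * (1 / 2 - r) : ℝ) * μ : ℂ)) • vstar + ((1 - t : ℝ) : ℂ) • p := by
    rw [hz', Complex.coe_smul]; simp only [w]; push_cast; module
  have hw2 : ‖w‖ ^ 2 = (1 / 2 - r) ^ 2 + ‖p‖ ^ 2 := by
    simp only [w]; rw [plane]; ring
  have hc : 4 / 5 < c := by rw [hc_def]; nlinarith
  have hc1 : c < 1 := by rw [hc_def]; nlinarith
  set σ := √(1 - c ^ 2)
  have hσ2 : σ ^ 2 = 1 - c ^ 2 := Real.sq_sqrt (by nlinarith)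
  have hpos : 0 < ‖p‖ := by nlinarith [norm_nonneg p, norm_nonneg ⟪vstar, z⟫_ℂ]
  obtain ⟨hlen, hchord⟩ := planar_chord hc (norm_nonneg _) hcone
    (Real.sqrt_pos.2 (by nlinarith)) hσ2 hpos hp2
  refine ⟨w, fun h => by rw [h, norm_zero] at hw2; nlinarith,
    chordLo c r σ ‖p‖, chordHi c r σ ‖p‖, ?_, ?_⟩
  · calc 9 / 10 * γ < σ / c := nine_div_ten_mul_lt_sqrt_div hγ0 hγ
      _ = ‖p‖ * (σ / (c * ‖p‖)) := by field_simp
      _ ≤ ‖w‖ * (chordHi c r σ ‖p‖ - chordLo c r σ ‖p‖) := by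
        gcongr
        exact pow_le_pow_iff_left₀ hpos.le (norm_nonneg _) two_ne_zero |>.1 (by nlinarith)
  · ext t
    rw [mem_ofPred_eq, mem_Kset_iff_sq hvstar hγ0.le (by linarith), hline, plane,
      inner_smul_add_smul_of_inner_eq_zero hvstar hp, norm_mul, hμ, mul_one, Complex.norm_real,
      Real.norm_eq_abs, sq_abs]
    exact hchord t

end Chords

theorem setOf_add_smul_inv_norm_smul_eq_Icc {F : Type*} [NormedAddCommGroup F] [NormedSpace ℝ F]
    {S : Set F} {z w : F} {t₁ t₂ : ℝ} (hw : w ≠ 0) (h : {t : ℝ | z + t • w ∈ S} = Icc t₁ t₂) :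
    {τ : ℝ | z + τ • (‖w‖⁻¹ • w) ∈ S} = Icc (‖w‖ * t₁) (‖w‖ * t₂) := by
  have hw0 : 0 < ‖w‖ := norm_pos_iff.2 hw
  ext τ
  have hτ := congrArg (τ * ‖w‖⁻¹ ∈ ·) h
  simp only [mem_ofPred_eq, mem_Icc, eq_iff_iff] at hτ
  rw [mem_ofPred_eq, smul_smul, hτ, mem_Icc, ← div_eq_mul_inv, le_div_iff₀ hw0, div_le_iff₀ hw0,
    mul_comm t₁, mul_comm t₂]

theorem long_chord_general (n : ℕ) (vstar : En n) (hvstar : ‖vstar‖ = 1)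
    (γ : ℝ) (hγ0 : 0 < γ) (hγ : γ ≤ 2 * Real.log 3 / (9 * Real.exp 1))
    (z : En n) (hz : ‖z‖ = 1) :
    ∃ u : En n, ‖u‖ = 1 ∧
      ∃ a b : ℝ, 9 / 10 * γ < b - a ∧
        Set.Ioo a b ⊆ {τ : ℝ | z + τ • u ∈ Kset n vstar γ} ∧
        {τ : ℝ | z + τ • u ∈ Kset n vstar γ} ⊆ Set.Icc a b := by
  have hγ' : γ ≤ 2 / 9 := hγ.trans two_mul_log_three_div_le
  rcases le_or_gt (1 - γ ^ 2 / 2) ‖⟪vstar, z⟫_ℂ‖ with hcone | hcone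
  · have hK := setOf_add_smul_neg_mem_Kset hvstar hz hγ0.le hcone
    exact ⟨-z, by rw [norm_neg, hz], 0, 2, by linarith, hK.superset,
      hK.subset.trans Ioo_subset_Icc_self⟩
  · obtain ⟨w, hw, t₁, t₂, hlen, hK⟩ := exists_chord_of_norm_inner_lt hvstar hz hγ0 hγ' hcone
    have hK' := setOf_add_smul_inv_norm_smul_eq_Icc hw hK
    refine ⟨‖w‖⁻¹ • w, norm_smul_inv_norm (𝕜 := ℝ) hw, _, _, ?_,
      hK'.superset.trans' Ioo_subset_Icc_self, hK'.subset⟩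
    rwa [← mul_sub]

/-- **Lemma 6.3** (a geometric lemma: long chords of `K` through boundary points). -/
theorem long_chord (n : ℕ) (hn : 1 ≤ n) (vstar : En n) (hvstar : ‖vstar‖ = 1)
    (γ : ℝ) (hγ0 : 0 < γ) (hγ : γ ≤ 2 * Real.log 3 / (9 * Real.exp 1))
    (z : En n) (hz : ‖z‖ = 1) :
    ∃ u : En n, ‖u‖ = 1 ∧
      ∃ a b : ℝ, 9 / 10 * γ < b - a ∧
        Set.Ioo a b ⊆ {τ : ℝ | z + τ • u ∈ Kset n vstar γ} ∧
        {τ : ℝ | z + τ • u ∈ Kset n vstar γ} ⊆ Set.Icc a b :=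
  long_chord_general n vstar hvstar γ hγ0 hγ z hz
end

section
/- Let f be a nonconstant entire function on ℂⁿ of infinite order, i.e., limsup_{r→∞} ln m_f(r)/ln r = ∞, and set φ_f(t) := m_f(e^t) for t ∈ ℝ (a convex increasing function). Then liminf_{t→∞} t²·φ_f'₊(t)/(φ_f(t)·(ln φ_f(t))²) = 0, where φ_f'₊ denotes the right derivative of the convex function φ_f. -/
open Metric Set Filter MeasureTheory
open scoped Real ENNReal Topology

/-!
Write `φ(t) = log M_f(eᵗ)`, which is increasing and tends to `∞` by Liouville's theorem, so the
quotient `t² φ'₊(t) / (φ(t) (log φ(t))²)` is eventually nonnegative. If it stayed above some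
`ε > 0`, then `F = 1 / log φ` would satisfy `F'₊(t) ≤ -ε / t²`; since `F(t) → 0`, integrating
from `t` to `∞` gives `F(t) ≥ ε / t`, that is `log log M_f(r) ≤ (log r) / ε` for large `r`, so `f`
would have order at most `1 / ε`.
-/

open Real

section SupMod0

variable {E : Type*} [NormedAddCommGroup E] {f : E → ℂ}

theorem supMod0_of_nonpos {r : ℝ} (hr : r ≤ 0) : supMod0 f r = 0 := by
  simp [supMod0, supMod, ball_eq_empty.2 hr]

variable [ProperSpace E]

theorem bddAbove_norm_image_ball (hf : Continuous f) (r : ℝ) :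
    BddAbove ((‖f ·‖) '' ball (0 : E) r) :=
  ((isCompact_closedBall 0 r).bddAbove_image hf.norm.continuousOn).mono
    (image_mono ball_subset_closedBall)

theorem norm_le_supMod0 (hf : Continuous f) {r : ℝ} {z : E} (hz : ‖z‖ < r) :
    ‖f z‖ ≤ supMod0 f r :=
  le_csSup (bddAbove_norm_image_ball hf r) ⟨z, mem_ball_zero_iff.2 hz, rfl⟩

theorem supMod0_nonneg (hf : Continuous f) (r : ℝ) : 0 ≤ supMod0 f r := by
  rcases le_or_gt r 0 with hr | hr
  · rw [supMod0_of_nonpos hr]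
  · exact (norm_nonneg _).trans (norm_le_supMod0 hf (z := 0) (by simpa using hr))

theorem supMod0_mono (hf : Continuous f) : Monotone (supMod0 f) := by
  intro r s hrs
  rcases le_or_gt r 0 with hr | hr
  · rw [supMod0_of_nonpos hr]
    exact supMod0_nonneg hf s
  · exact csSup_le_csSup (bddAbove_norm_image_ball hf s) ((nonempty_ball.2 hr).image _)
      (image_mono (ball_subset_ball hrs))

theorem tendsto_supMod0_atTop [NormedSpace ℂ E] (hf : Differentiable ℂ f)
    (hnc : ¬∃ c : ℂ, f = fun _ => c) : Tendsto (supMod0 f) atTop atTop := by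
  refine tendsto_atTop_atTop_of_monotone (supMod0_mono hf.continuous) fun b => ?_
  by_contra! hb
  refine hnc ⟨f 0, funext fun z => hf.apply_eq_apply_of_bounded ?_ z 0⟩
  refine isBounded_iff_forall_norm_le.2 ⟨b, forall_mem_range.2 fun z => ?_⟩
  exact (norm_le_supMod0 hf.continuous (lt_add_one ‖z‖)).trans (hb _).le

variable [NormedSpace ℝ E]

theorem supMod0_eq_sSup_closedBall (hf : Continuous f) {r : ℝ} (hr : 0 < r) :
    supMod0 f r = sSup ((‖f ·‖) '' closedBall (0 : E) r) := by
  have hsub : (‖f ·‖) '' closedBall (0 : E) r ⊆ closure ((‖f ·‖) '' ball 0 r) := by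
    rw [← closure_ball (0 : E) hr.ne']
    exact image_closure_subset_closure_image hf.norm
  have hlub := isLUB_csSup ((nonempty_closedBall.2 hr.le).image _)
    ((isCompact_closedBall (0 : E) r).bddAbove_image hf.norm.continuousOn)
  exact ((isLUB_iff_of_subset_of_subset_closure (image_mono ball_subset_closedBall) hsub).2
    hlub).csSup_eq ((nonempty_ball.2 hr).image _)

theorem continuousOn_supMod0 (hf : Continuous f) : ContinuousOn (supMod0 f) (Ioi 0) := by
  have hcont : Continuous fun r : ℝ => sSup ((fun w : E => ‖f (r • w)‖) '' closedBall 0 1) :=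
    (isCompact_closedBall 0 1).continuous_sSup (by fun_prop)
  refine hcont.continuousOn.congr fun r hr => ?_
  rw [supMod0_eq_sSup_closedBall hf hr, ← smul_unitClosedBall_of_nonneg (le_of_lt hr),
    ← image_smul, image_image]

end SupMod0

theorem liminf_eq_of_eventually_ge_of_frequently_lt {α : Type*} {l : Filter α} {g : α → ℝ}
    {c : ℝ} (hge : ∀ᶠ x in l, c ≤ g x) (hlt : ∀ ε > 0, ∃ᶠ x in l, g x < c + ε) :
    liminf g l = c := by
  have hbdd : IsBoundedUnder (· ≥ ·) l g := ⟨c, eventually_map.2 hge⟩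
  have hcobdd : IsCoboundedUnder (· ≥ ·) l g :=
    .of_frequently_le ((hlt 1 one_pos).mono fun _ h => h.le)
  refine le_antisymm (le_of_forall_pos_le_add fun ε hε => ?_) (le_liminf_of_le hcobdd hge)
  exact liminf_le_of_frequently_le ((hlt ε hε).mono fun _ h => h.le) hbdd

theorem frequently_lt_log_log_of_limsup_eq_top {M : ℝ → ℝ}
    (h : limsup (fun r => ENNReal.ofReal (log (log (M r)) / log r)) atTop = ⊤)
    (ε : ℝ) : ∃ᶠ t in atTop, t / ε < log (log (M (exp t))) := by
  by_contra! hle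
  have hbound : ∀ᶠ r in atTop,
      ENNReal.ofReal (log (log (M r)) / log r) ≤ ENNReal.ofReal (1 / ε) := by
    filter_upwards [tendsto_log_atTop.eventually hle, tendsto_log_atTop.eventually_gt_atTop 0,
      eventually_gt_atTop 0] with r hr hlog hr0
    rw [exp_log hr0] at hr
    refine ENNReal.ofReal_le_ofReal ((div_le_iff₀ hlog).2 ?_)
    rwa [one_div_mul_eq_div]
  exact ENNReal.ofReal_ne_top (top_le_iff.1 (h ▸ limsup_le_of_le (by isBoundedDefault) hbound))

theorem div_le_of_hasDerivWithinAt_le_neg_div_sq {F F' : ℝ → ℝ} {a ε : ℝ} (ha : 0 < a)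
    (hcont : ContinuousOn F (Ici a)) (hderiv : ∀ x ∈ Ici a, HasDerivWithinAt F (F' x) (Ioi x) x)
    (hle : ∀ x ∈ Ici a, F' x ≤ -ε / x ^ 2) (hlim : Tendsto F atTop (𝓝 0)) :
    ε / a ≤ F a := by
  set B : ℝ → ℝ := fun x => F a - ε / a + ε * x⁻¹
  have hB : ∀ x ∈ Ici a, HasDerivAt B (-ε / x ^ 2) x := fun x hx => by
    have := ((hasDerivAt_inv (ha.trans_le hx).ne').const_mul ε).const_add (F a - ε / a)
    rwa [mul_neg, ← div_eq_mul_inv, ← neg_div] at this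
  have hFB : ∀ x ∈ Ici a, F x ≤ B x := fun x hx =>
    image_le_of_deriv_right_le_deriv_boundary (hcont.mono Icc_subset_Ici_self)
      (fun y hy => (hderiv y hy.1).Ici_of_Ioi) (by simp [B, div_eq_mul_inv])
      (fun y hy => (hB y hy.1).continuousAt.continuousWithinAt)
      (fun y hy => (hB y hy.1).hasDerivWithinAt) (fun y hy => hle y hy.1) ⟨hx, le_rfl⟩
  have hBlim : Tendsto B atTop (𝓝 (F a - ε / a + ε * 0)) :=
    tendsto_const_nhds.add (tendsto_inv_atTop_zero.const_mul ε)
  have := le_of_tendsto_of_tendsto hlim hBlim (eventually_ge_atTop a |>.mono hFB)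
  linarith

theorem eventually_log_le_div_of_eventually_le {φ : ℝ → ℝ} {a ε : ℝ}
    (hcont : ContinuousOn φ (Ici a)) (htend : Tendsto φ atTop atTop) (hε : 0 < ε)
    (h : ∀ᶠ τ in atTop, ε ≤ τ ^ 2 * derivWithin φ (Ioi τ) τ / (φ τ * log (φ τ) ^ 2)) :
    ∀ᶠ t in atTop, log (φ t) ≤ t / ε := by
  obtain ⟨T, hT⟩ := eventually_atTop.1 (h.and (htend.eventually_gt_atTop 1))
  filter_upwards [eventually_ge_atTop T, eventually_gt_atTop 0, eventually_ge_atTop a]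
    with t hTt ht0 hat
  have hφ : ∀ x ∈ Ici t, 0 < φ x := fun x hx => one_pos.trans (hT x (hTt.trans hx)).2
  have hlog : ∀ x ∈ Ici t, 0 < log (φ x) := fun x hx => log_pos (hT x (hTt.trans hx)).2
  have hderiv : ∀ x ∈ Ici t, HasDerivWithinAt (fun y => (log (φ y))⁻¹)
      (-(derivWithin φ (Ioi x) x / φ x) / log (φ x) ^ 2) (Ioi x) x := by
    intro x hx
    have hεx := (hT x (hTt.trans hx)).1
    have hd : DifferentiableWithinAt ℝ φ (Ioi x) x := by
      by_contra hnd
      simp only [derivWithin_zero_of_not_differentiableWithinAt hnd, mul_zero, zero_div] at hεx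
      exact hεx.not_gt hε
    exact (hd.hasDerivWithinAt.log (hφ x hx).ne').inv (hlog x hx).ne'
  have hle : ∀ x ∈ Ici t, -(derivWithin φ (Ioi x) x / φ x) / log (φ x) ^ 2 ≤ -ε / x ^ 2 := by
    intro x hx
    have hεx := (hT x (hTt.trans hx)).1
    have : -(derivWithin φ (Ioi x) x / φ x) / log (φ x) ^ 2 =
        -(x ^ 2 * derivWithin φ (Ioi x) x / (φ x * log (φ x) ^ 2)) / x ^ 2 := by
      field_simp [(hφ x hx).ne', (hlog x hx).ne', (ht0.trans_le hx).ne']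
    rw [this]
    exact div_le_div_of_nonneg_right (neg_le_neg hεx) (sq_nonneg x)
  have hcontF : ContinuousOn (fun y => (log (φ y))⁻¹) (Ici t) :=
    ((hcont.mono (Ici_subset_Ici.2 hat)).log fun x hx => (hφ x hx).ne').inv₀
      fun x hx => (hlog x hx).ne'
  have hF := div_le_of_hasDerivWithinAt_le_neg_div_sq ht0 hcontF hderiv hle
    (tendsto_log_atTop.comp htend).inv_tendsto_atTop
  simpa [inv_div] using (le_inv_comm₀ (by positivity) (hlog t (mem_Ici.2 le_rfl))).1 hF

theorem liminf_sq_mul_derivWithin_div_eq_zero {φ : ℝ → ℝ} {a : ℝ}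
    (hcont : ContinuousOn φ (Ici a)) (hmono : MonotoneOn φ (Ici a))
    (htend : Tendsto φ atTop atTop) (hfast : ∀ ε > 0, ∃ᶠ t in atTop, t / ε < log (φ t)) :
    liminf (fun τ => τ ^ 2 * derivWithin φ (Ioi τ) τ / (φ τ * log (φ τ) ^ 2)) atTop = 0 := by
  refine liminf_eq_of_eventually_ge_of_frequently_lt ?_ fun ε hε => ?_
  · filter_upwards [eventually_ge_atTop a, htend.eventually_ge_atTop 0] with τ hτ hφ
    have hd : 0 ≤ derivWithin φ (Ioi τ) τ :=
      (hmono.mono (Ioi_subset_Ici hτ)).derivWithin_nonneg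
    exact div_nonneg (mul_nonneg (sq_nonneg _) hd) (mul_nonneg hφ (sq_nonneg _))
  · by_contra! h
    have hslow := eventually_log_le_div_of_eventually_le hcont htend hε (by simpa using h)
    obtain ⟨t, hlt, hle⟩ := ((hfast ε hε).and_eventually hslow).exists
    exact hle.not_gt hlt

/-- **Lemma 8.3**: for an entire function of infinite order,
`liminf_{t→∞} t²·φ'₊(t)/(φ(t)(ln φ(t))²) = 0`, where `φ(t) = m_f(eᵗ)`. -/
theorem infinite_order_liminf (n : ℕ) (f : En n → ℂ) (hf : Differentiable ℂ f)
    (hnc : ¬∃ c : ℂ, f = fun _ => c)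
    (hord : Filter.limsup
      (fun r : ℝ => ENNReal.ofReal (Real.log (Real.log (supMod0 f r)) / Real.log r))
      Filter.atTop = (⊤ : ℝ≥0∞)) :
    Filter.liminf
      (fun τ : ℝ => τ ^ 2 *
        derivWithin (fun u : ℝ => Real.log (supMod0 f (Real.exp u))) (Set.Ioi τ) τ /
          (Real.log (supMod0 f (Real.exp τ)) *
            (Real.log (Real.log (supMod0 f (Real.exp τ)))) ^ 2))
      Filter.atTop = 0 := by
  have hM : Tendsto (fun t => supMod0 f (exp t)) atTop atTop :=
    (tendsto_supMod0_atTop hf hnc).comp tendsto_exp_atTop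
  obtain ⟨a, hpos⟩ := eventually_atTop.1 (hM.eventually_gt_atTop 0)
  have hcont : ContinuousOn (fun t => supMod0 f (exp t)) (Ici a) :=
    (continuousOn_supMod0 hf.continuous).comp continuous_exp.continuousOn fun t _ => exp_pos t
  refine liminf_sq_mul_derivWithin_div_eq_zero (hcont.log fun t ht => (hpos t ht).ne')
    (fun s hs t _ hst => log_le_log (hpos s hs) (supMod0_mono hf.continuous (exp_le_exp.2 hst)))
    (tendsto_log_atTop.comp hM) fun ε _ => frequently_lt_log_log_of_limsup_eq_top hord ε
end
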